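/- arXiv:1107.1814 — 2 statements merged into one kernel-verified Lean document; each statement's English description precedes it below -/
import Mathlib

section
/- For any finite multiset A of nonnegative reals, any nonnegative real b, and any integer k ≥ 1, Ψ_k(A ∪ {b}) ≤ (Ψ_k(A)^{1/k} + Ψ_k({b})^{1/k})^k. -/
/-!
For a rate-one exponential variable `E`, `∫ (b E)^j = j! b^j = Ψ_j({b})`. Unfolding the recursion
of `hcomp` in its first argument turns `Ψ_k(A ∪ {b})` into the binomial convolution
`∑ C(k, i) Ψ_i(A) Ψ_{k-i}({b})`, which is the `k`-th moment of `X + b E` when `X` is independent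
of `E` and has moments `Ψ_m(A)`. Inductively, `Ψ_m(A)` is the `m`-th moment of `∑_{a ∈ A} a E_a`
for independent exponentials `E_a`, and the inequality is Minkowski's inequality in `L^k`
applied to `X + b E`.
-/

/-- Complete homogeneous sum: sum of all monomials of total degree `k` (with
repetition) in the elements of the list. -/
noncomputable def hcomp : List ℝ → ℕ → ℝ
  | _, 0 => 1
  | [], _ + 1 => 0
  | a :: l, k + 1 => a * hcomp (a :: l) k + hcomp l (k + 1)
  termination_by l k => (l.length, k)

/-- `Ψ_k(A)`: `k!` times the sum of all monomials of total degree `k` in the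
elements of `A`. -/
noncomputable def Psi (k : ℕ) (A : List ℝ) : ℝ := (k.factorial : ℝ) * hcomp A k

open MeasureTheory ProbabilityTheory Finset
open scoped Nat ENNReal

lemma hcomp_zero (l : List ℝ) : hcomp l 0 = 1 := by
  cases l <;> rw [hcomp]

lemma hcomp_nil_succ (k : ℕ) : hcomp [] (k + 1) = 0 := by
  rw [hcomp]

lemma hcomp_cons_succ (a : ℝ) (l : List ℝ) (k : ℕ) :
    hcomp (a :: l) (k + 1) = a * hcomp (a :: l) k + hcomp l (k + 1) := by
  rw [hcomp]

lemma hcomp_singleton (b : ℝ) (k : ℕ) : hcomp [b] k = b ^ k := by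
  induction k with
  | zero => rw [hcomp_zero, pow_zero]
  | succ k ih => rw [hcomp_cons_succ, hcomp_nil_succ, ih, add_zero, pow_succ']

lemma hcomp_cons (b : ℝ) (A : List ℝ) (k : ℕ) :
    hcomp (b :: A) k = ∑ m ∈ antidiagonal k, hcomp A m.1 * b ^ m.2 := by
  induction k with
  | zero => simp [hcomp_zero]
  | succ k ih =>
    rw [hcomp_cons_succ, Nat.sum_antidiagonal_succ', ih, mul_sum, pow_zero, mul_one, add_comm]
    congr 1
    exact sum_congr rfl fun m _ ↦ by ring

lemma hcomp_nonneg {A : List ℝ} (hA : ∀ a ∈ A, 0 ≤ a) (k : ℕ) : 0 ≤ hcomp A k := by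
  induction A generalizing k with
  | nil => cases k <;> simp [hcomp_zero, hcomp_nil_succ]
  | cons b A ih =>
    rw [hcomp_cons]
    exact sum_nonneg fun m _ ↦ mul_nonneg (ih (fun a ha ↦ hA a (.tail b ha)) m.1)
      (pow_nonneg (hA b (.head A)) m.2)

lemma Psi_nonneg {A : List ℝ} (hA : ∀ a ∈ A, 0 ≤ a) (k : ℕ) : 0 ≤ Psi k A :=
  mul_nonneg (Nat.cast_nonneg _) (hcomp_nonneg hA k)

lemma Psi_cons (b : ℝ) (A : List ℝ) (k : ℕ) :
    Psi k (b :: A) = ∑ m ∈ antidiagonal k, k.choose m.1 * (Psi m.1 A * Psi m.2 [b]) := by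
  rw [Psi, hcomp_cons, mul_sum]
  refine sum_congr rfl fun m hm ↦ ?_
  obtain rfl := mem_antidiagonal.1 hm
  rw [Psi, Psi, hcomp_singleton, ← Nat.add_choose_mul_factorial_mul_factorial,
    Nat.choose_symm_add]
  push_cast
  ring

lemma lintegral_ofReal_pow_expMeasure_one (j : ℕ) :
    ∫⁻ x, ENNReal.ofReal x ^ j ∂expMeasure 1 = j ! := by
  have hdensity : expMeasure 1 = volume.withDensity (exponentialPDF 1) := rfl
  have hpdf : Measurable (exponentialPDF 1) := (measurable_exponentialPDFReal 1).ennreal_ofReal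
  have hintegrand : (fun x ↦ exponentialPDF 1 x * ENNReal.ofReal x ^ j) =
      (Set.Ici 0).indicator fun x ↦ ENNReal.ofReal (Real.exp (-x) * x ^ j) := by
    ext x
    rcases lt_or_ge x 0 with hx | hx
    · simp [exponentialPDF_of_neg hx, hx]
    · simp [exponentialPDF_of_nonneg hx, hx, ENNReal.ofReal_mul (Real.exp_nonneg _),
        ENNReal.ofReal_pow hx]
  have hGamma : IntegrableOn (fun x ↦ Real.exp (-x) * x ^ j) (Set.Ioi 0) := by
    refine (Real.GammaIntegral_convergent (s := j + 1) (by positivity)).congr_fun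
      (fun x _ ↦ ?_) measurableSet_Ioi
    simp
  rw [hdensity, lintegral_withDensity_eq_lintegral_mul _ hpdf (by fun_prop)]
  simp only [Pi.mul_apply]
  rw [hintegrand, lintegral_indicator measurableSet_Ici, setLIntegral_congr Ioi_ae_eq_Ici.symm,
    ← ofReal_integral_eq_lintegral_ofReal hGamma
      (ae_restrict_of_forall_mem measurableSet_Ioi fun x (hx : 0 < x) ↦ by positivity),
    ← ENNReal.ofReal_natCast, ← Real.Gamma_nat_eq_factorial,
    Real.Gamma_eq_integral (by positivity)]
  simp

lemma lintegral_add_pow_prod {α β : Type*} [MeasurableSpace α] [MeasurableSpace β]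
    {μ : Measure α} {ν : Measure β} [SFinite ν] {f : α → ℝ≥0∞} {g : β → ℝ≥0∞}
    (hf : Measurable f) (hg : Measurable g) (k : ℕ) :
    ∫⁻ p, (f p.1 + g p.2) ^ k ∂μ.prod ν =
      ∑ m ∈ antidiagonal k, k.choose m.1 * ((∫⁻ x, f x ^ m.1 ∂μ) * ∫⁻ y, g y ^ m.2 ∂ν) := by
  have hbinomial (p : α × β) : (f p.1 + g p.2) ^ k =
      ∑ m ∈ antidiagonal k, k.choose m.1 * (f p.1 ^ m.1 * g p.2 ^ m.2) := by
    simp_rw [(Commute.all (f p.1) (g p.2)).add_pow', nsmul_eq_mul]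
  rw [lintegral_congr hbinomial, lintegral_finsetSum _ fun m _ ↦ by fun_prop]
  refine sum_congr rfl fun m _ ↦ ?_
  rw [lintegral_const_mul _ (by fun_prop),
    lintegral_prod_mul (hf.pow_const _).aemeasurable (hg.pow_const _).aemeasurable]

lemma ENNReal.lintegral_add_pow_le {α : Type*} [MeasurableSpace α] {μ : Measure α}
    {f g : α → ℝ≥0∞} (hf : AEMeasurable f μ) (hg : AEMeasurable g μ) {k : ℕ} (hk : 1 ≤ k) :
    ∫⁻ a, (f a + g a) ^ k ∂μ ≤
      ((∫⁻ a, f a ^ k ∂μ) ^ (1 / (k : ℝ)) + (∫⁻ a, g a ^ k ∂μ) ^ (1 / (k : ℝ))) ^ k := by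
  have hk₀ : k ≠ 0 := by omega
  have h := ENNReal.lintegral_Lp_add_le hf hg (p := k) (by exact_mod_cast hk)
  simp only [Pi.add_apply, ENNReal.rpow_natCast, one_div] at h ⊢
  calc ∫⁻ a, (f a + g a) ^ k ∂μ = ((∫⁻ a, (f a + g a) ^ k ∂μ) ^ (k⁻¹ : ℝ)) ^ k :=
        (ENNReal.rpow_inv_natCast_pow hk₀ _).symm
    _ ≤ _ := pow_le_pow_left₀ bot_le h k

lemma ENNReal.ofReal_rpow_add_ofReal_rpow_pow {x y : ℝ} (hx : 0 ≤ x) (hy : 0 ≤ y) {r : ℝ}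
    (hr : 0 ≤ r) (k : ℕ) :
    (ENNReal.ofReal x ^ r + ENNReal.ofReal y ^ r) ^ k = ENNReal.ofReal ((x ^ r + y ^ r) ^ k) := by
  rw [ENNReal.ofReal_rpow_of_nonneg hx hr, ENNReal.ofReal_rpow_of_nonneg hy hr,
    ← ENNReal.ofReal_add (by positivity) (by positivity), ENNReal.ofReal_pow (by positivity)]

def HasPsiMoments {Ω : Type*} [MeasurableSpace Ω] (μ : Measure Ω) (X : Ω → ℝ≥0∞)
    (A : List ℝ) : Prop :=
  ∀ m, ∫⁻ ω, X ω ^ m ∂μ = ENNReal.ofReal (Psi m A)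

namespace HasPsiMoments

variable {Ω Ω' : Type*} [MeasurableSpace Ω] [MeasurableSpace Ω'] {μ : Measure Ω}
  {ν : Measure Ω'} {X : Ω → ℝ≥0∞} {Y : Ω' → ℝ≥0∞} {A : List ℝ}

lemma nil : HasPsiMoments (Measure.dirac ()) (fun _ ↦ 0) [] := by
  intro m
  cases m <;> simp [Psi, hcomp_zero, hcomp_nil_succ]

lemma expMeasure_singleton {b : ℝ} (hb : 0 ≤ b) :
    HasPsiMoments (expMeasure 1) (fun x ↦ ENNReal.ofReal b * ENNReal.ofReal x) [b] := by
  intro m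
  simp_rw [mul_pow]
  rw [lintegral_const_mul _ (by fun_prop), lintegral_ofReal_pow_expMeasure_one, Psi,
    hcomp_singleton, mul_comm, ENNReal.ofReal_mul (by positivity), ENNReal.ofReal_pow hb,
    ENNReal.ofReal_natCast]

lemma comp_measurePreserving {T : Ω' → Ω} (h : HasPsiMoments μ X A) (hX : Measurable X)
    (hT : MeasurePreserving T ν μ) : HasPsiMoments ν (fun ω ↦ X (T ω)) A := fun m ↦
  (hT.lintegral_comp (hX.pow_const m)).trans (h m)

lemma prod [SFinite ν] (hX : Measurable X) (hY : Measurable Y) (hA : ∀ a ∈ A, 0 ≤ a) {b : ℝ}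
    (hb : 0 ≤ b) (hXA : HasPsiMoments μ X A) (hYb : HasPsiMoments ν Y [b]) :
    HasPsiMoments (μ.prod ν) (fun p ↦ X p.1 + Y p.2) (b :: A) := by
  intro k
  have hb' : ∀ a ∈ [b], 0 ≤ a := by simpa using hb
  rw [lintegral_add_pow_prod hX hY, Psi_cons, ENNReal.ofReal_sum_of_nonneg fun m _ ↦
    by have := Psi_nonneg hA m.1; have := Psi_nonneg hb' m.2; positivity]
  refine sum_congr rfl fun m _ ↦ ?_
  rw [hXA, hYb, ENNReal.ofReal_mul (Nat.cast_nonneg _), ENNReal.ofReal_natCast,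
    ENNReal.ofReal_mul (Psi_nonneg hA _)]

end HasPsiMoments

lemma exists_hasPsiMoments {A : List ℝ} (hA : ∀ a ∈ A, 0 ≤ a) :
    ∃ (Ω : Type) (_ : MeasurableSpace Ω) (μ : Measure Ω) (_ : IsProbabilityMeasure μ)
      (X : Ω → ℝ≥0∞), Measurable X ∧ HasPsiMoments μ X A := by
  induction A with
  | nil => exact ⟨Unit, ⊤, _, inferInstance, _, measurable_const, .nil⟩
  | cons b A ih =>
    have hb : 0 ≤ b := hA b (.head A)
    obtain ⟨Ω, _, μ, _, X, hX, hXA⟩ := ih fun a ha ↦ hA a (.tail b ha)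
    have := isProbabilityMeasure_expMeasure one_pos
    exact ⟨Ω × ℝ, inferInstance, μ.prod (expMeasure 1), inferInstance, _, by fun_prop,
      hXA.prod hX (by fun_prop) (fun a ha ↦ hA a (.tail b ha)) hb
        (.expMeasure_singleton hb)⟩

theorem stmt_8 (k : ℕ) (hk : 1 ≤ k) (A : List ℝ) (hA : ∀ a ∈ A, 0 ≤ a)
    (b : ℝ) (hb : 0 ≤ b) :
    Psi k (b :: A) ≤ (Psi k A ^ (1 / (k : ℝ)) + Psi k [b] ^ (1 / (k : ℝ))) ^ k := by
  obtain ⟨Ω, _, μ, _, X, hX, hXA⟩ := exists_hasPsiMoments hA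
  have := isProbabilityMeasure_expMeasure one_pos
  have hY : Measurable fun x ↦ ENNReal.ofReal b * ENNReal.ofReal x := by fun_prop
  have hYb := HasPsiMoments.expMeasure_singleton hb
  have hMinkowski := ENNReal.lintegral_add_pow_le (μ := μ.prod (expMeasure 1))
    (hX.comp measurable_fst).aemeasurable (hY.comp measurable_snd).aemeasurable hk
  simp only [Function.comp_apply] at hMinkowski
  have hψA := Psi_nonneg hA k
  have hψb := Psi_nonneg (A := [b]) (by simpa using hb) k
  rw [hXA.prod hX hY hA hb hYb k, hXA.comp_measurePreserving hX measurePreserving_fst k,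
    hYb.comp_measurePreserving hY measurePreserving_snd k,
    ENNReal.ofReal_rpow_add_ofReal_rpow_pow hψA hψb (by positivity)] at hMinkowski
  exact (ENNReal.ofReal_le_ofReal_iff (by positivity)).1 hMinkowski
end

section
/- Let N be a pure Nash equilibrium of the game induced by BCOORD with parameter p ≥ 1 and O any assignment. Then (∑_j L(N_j)^{p+1})^{1/(p+1)} ≤ ((2p+1)/ln(p+1)) · m^{1/(p+1)} · max_j L(O_j). -/
/-!
Raising the equilibrium condition to the `p`-th power (the factor `1 / wmin` cancels) gives
`w_{i,N(i)} L(N_{N(i)})^p ≤ w_{ij} (L(N_j) + w_{ij})^p` for every machine `j`. Taking `j = O(i)` and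
summing over jobs yields `∑_j L(N_j)^{p+1} ≤ T ∑_j (L(N_j) + T)^p` with `T = max_j L(O_j)`; Hölder and
Minkowski in `ℓ^{p+1}` turn this into `Λ^{p+1} ≤ B (Λ + B)^p` for `Λ = ‖L(N)‖_{p+1}` and
`B = m^{1/(p+1)} T`. Then `y = Λ / B` satisfies `y^{p+1} ≤ (y + 1)^p`, which forces `y log y ≤ p`,
whereas `c = (2p+1) / log(p+1) ≥ √(p+1)` has `c log c > p`; monotonicity of `x log x` gives `y < c`.
-/

/-- The minimum load of job `i` over all machines. -/
noncomputable def wmin {n m : ℕ} (w : Fin n → Fin m → ℝ) (i : Fin n) : ℝ :=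
  sInf (Set.range (w i))

/-- The inefficiency of job `i` on machine `j`. -/
noncomputable def rho {n m : ℕ} (w : Fin n → Fin m → ℝ) (i : Fin n) (j : Fin m) : ℝ :=
  w i j / wmin w i

/-- The load of machine `j` under assignment `N`. -/
noncomputable def load {n m : ℕ} (w : Fin n → Fin m → ℝ) (N : Fin n → Fin m) (j : Fin m) : ℝ :=
  ∑ i ∈ Finset.univ.filter (fun i => N i = j), w i j

/-- The completion time of job `i` under assignment `N` with the BCOORD mechanism. -/
noncomputable def Bcost {n m : ℕ} (p : ℕ) (w : Fin n → Fin m → ℝ)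
    (N : Fin n → Fin m) (i : Fin n) : ℝ :=
  rho w i (N i) ^ ((1 : ℝ) / p) * load w N (N i)

/-- `N` is a pure Nash equilibrium of the game induced by BCOORD. -/
def isNashB {n m : ℕ} (p : ℕ) (w : Fin n → Fin m → ℝ) (N : Fin n → Fin m) : Prop :=
  ∀ (i : Fin n) (j : Fin m), Bcost p w N i ≤ Bcost p w (Function.update N i j) i

open Finset Real

lemma sqrt_le_two_mul_sub_one_div_log {x : ℝ} (hx : 1 < x) : √x ≤ (2 * x - 1) / log x := by
  rw [le_div_iff₀ (log_pos hx)]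
  have hsq : √x ^ 2 = x := sq_sqrt (by linarith)
  have hs : 1 ≤ √x := one_le_sqrt.2 hx.le
  have hlog : log x = 2 * log √x := by rw [log_sqrt (by linarith)]; ring
  have hlog_le : log √x ≤ √x - 1 := log_le_sub_one_of_pos (by linarith)
  nlinarith

lemma mul_log_le_of_pow_succ_le {p : ℕ} {y : ℝ} (hy : 0 < y) (h : y ^ (p + 1) ≤ (y + 1) ^ p) :
    y * log y ≤ p := by
  have hlog : ((p : ℝ) + 1) * log y ≤ p * log (y + 1) := by
    simpa [log_pow] using log_le_log (by positivity) h
  have hlog_succ : log (y + 1) - log y ≤ 1 / y := by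
    rw [← log_div (by linarith) hy.ne']
    calc log ((y + 1) / y) ≤ (y + 1) / y - 1 := log_le_sub_one_of_pos (by positivity)
      _ = 1 / y := by field_simp; ring
  have : log y ≤ p / y := by
    calc log y ≤ p * (log (y + 1) - log y) := by linarith
      _ ≤ p * (1 / y) := by gcongr
      _ = p / y := by ring
  rwa [le_div_iff₀ hy, mul_comm] at this

theorem le_two_mul_add_one_div_log_of_pow_succ_le {p : ℕ} (hp : 1 ≤ p) {y : ℝ}
    (h : y ^ (p + 1) ≤ (y + 1) ^ p) : y ≤ (2 * p + 1) / log (p + 1) := by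
  have hp' : (1 : ℝ) ≤ p := by exact_mod_cast hp
  set c : ℝ := (2 * p + 1) / log (p + 1)
  have hlog : 0 < log ((p : ℝ) + 1) := log_pos (by linarith)
  have hsqrt : √((p : ℝ) + 1) ≤ c := by
    have := sqrt_le_two_mul_sub_one_div_log (x := (p : ℝ) + 1) (by linarith)
    rwa [show 2 * ((p : ℝ) + 1) - 1 = 2 * p + 1 by ring] at this
  have hc : 1 < c := (lt_sqrt zero_le_one).2 (by linarith) |>.trans_le hsqrt
  have hc_log : p < c * log c := by
    have : log ((p : ℝ) + 1) / 2 ≤ log c := by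
      rw [← log_sqrt (by linarith)]
      exact log_le_log (by positivity) hsqrt
    have hc_mul : c * log ((p : ℝ) + 1) = 2 * p + 1 := div_mul_cancel₀ _ hlog.ne'
    nlinarith
  by_contra! hyc
  have hy_log := mul_log_le_of_pow_succ_le (by linarith) h
  have : c * log c ≤ y * log y :=
    mul_le_mul hyc.le (log_le_log (by linarith) hyc.le) (log_nonneg hc.le) (by linarith)
  linarith

theorem le_two_mul_add_one_div_log_mul_of_pow_succ_le {p : ℕ} (hp : 1 ≤ p) {a b : ℝ}
    (ha : 0 ≤ a) (hb : 0 ≤ b) (h : a ^ (p + 1) ≤ b * (a + b) ^ p) :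
    a ≤ (2 * p + 1) / log (p + 1) * b := by
  rcases hb.eq_or_lt with rfl | hb
  · rw [zero_mul] at h
    rw [mul_zero, ← pow_eq_zero_iff p.succ_ne_zero |>.1 (le_antisymm h (by positivity))]
  rw [← div_le_iff₀ hb]
  refine le_two_mul_add_one_div_log_of_pow_succ_le hp ?_
  rw [div_add_one hb.ne', div_pow, div_pow, div_le_div_iff₀ (by positivity) (by positivity)]
  calc a ^ (p + 1) * b ^ p ≤ b * (a + b) ^ p * b ^ p := by gcongr
    _ = (a + b) ^ p * b ^ (p + 1) := by ring

section Lp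

variable {ι : Type*} (s : Finset ι) {p : ℕ} {f : ι → ℝ}

lemma sum_pow_le_card_rpow_mul_rpow_pow (hp : p ≠ 0) (hf : ∀ i, 0 ≤ f i) :
    ∑ i ∈ s, f i ^ p ≤
      (#s : ℝ) ^ (1 / ((p : ℝ) + 1)) * ((∑ i ∈ s, f i ^ (p + 1)) ^ (1 / ((p : ℝ) + 1))) ^ p := by
  have hp' : (0 : ℝ) < p := by positivity
  have hq : (1 : ℝ) ≤ ((p : ℝ) + 1) / p := by rw [le_div_iff₀ hp']; linarith
  have holder := inner_le_weight_mul_Lp_of_nonneg s hq (fun _ => 1) (fun i => f i ^ p)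
    (fun _ => zero_le_one) (fun i => pow_nonneg (hf i) p)
  simp only [one_mul, sum_const, nsmul_one, inv_div] at holder
  have hpow : ∀ i, (f i ^ p) ^ (((p : ℝ) + 1) / p) = f i ^ (p + 1) := fun i => by
    rw [← rpow_natCast, ← rpow_mul (hf i), mul_div_cancel₀ _ hp'.ne', ← Nat.cast_add_one,
      rpow_natCast]
  have hsum : 0 ≤ ∑ i ∈ s, f i ^ (p + 1) := sum_nonneg fun i _ => pow_nonneg (hf i) _
  convert holder using 2
  · rw [one_sub_div (by positivity), add_sub_cancel_left]
  · rw [sum_congr rfl fun i _ => hpow i, ← rpow_natCast, ← rpow_mul hsum]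
    ring_nf

lemma rpow_sum_add_pow_succ_le (hf : ∀ i, 0 ≤ f i) {T : ℝ} (hT : 0 ≤ T) :
    (∑ i ∈ s, (f i + T) ^ (p + 1)) ^ (1 / ((p : ℝ) + 1)) ≤
      (∑ i ∈ s, f i ^ (p + 1)) ^ (1 / ((p : ℝ) + 1)) + (#s : ℝ) ^ (1 / ((p : ℝ) + 1)) * T := by
  have minkowski := Lp_add_le_of_nonneg s (f := f) (g := fun _ => T) (p := (p : ℝ) + 1)
    (by linarith [p.cast_nonneg (α := ℝ)]) (fun i _ => hf i) (fun _ _ => hT)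
  simp only [← Nat.cast_add_one, rpow_natCast, sum_const, nsmul_eq_mul] at minkowski
  rwa [mul_rpow (by positivity) (by positivity), one_div, pow_rpow_inv_natCast hT p.succ_ne_zero,
    ← one_div, Nat.cast_add_one] at minkowski

lemma sum_add_pow_le (hp : p ≠ 0) (hf : ∀ i, 0 ≤ f i) {T : ℝ} (hT : 0 ≤ T) :
    ∑ i ∈ s, (f i + T) ^ p ≤ (#s : ℝ) ^ (1 / ((p : ℝ) + 1)) *
      ((∑ i ∈ s, f i ^ (p + 1)) ^ (1 / ((p : ℝ) + 1)) + (#s : ℝ) ^ (1 / ((p : ℝ) + 1)) * T) ^ p :=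
  (sum_pow_le_card_rpow_mul_rpow_pow s hp fun i => add_nonneg (hf i) hT).trans <|
    mul_le_mul_of_nonneg_left (pow_le_pow_left₀
      (rpow_nonneg (sum_nonneg fun i _ => pow_nonneg (add_nonneg (hf i) hT) _) _)
      (rpow_sum_add_pow_succ_le s hf hT) p) (by positivity)

end Lp

section Loads

variable {n m : ℕ} {w : Fin n → Fin m → ℝ}

lemma wmin_pos (hm : 0 < m) (hw : ∀ i j, 0 < w i j) (i : Fin n) : 0 < wmin w i := by
  obtain ⟨j, hj⟩ := (Set.range_nonempty_iff_nonempty.2 ⟨⟨0, hm⟩⟩).csInf_mem (Set.finite_range (w i))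
  rw [wmin, ← hj]
  exact hw i j

lemma load_nonneg (hw : ∀ i j, 0 ≤ w i j) (N : Fin n → Fin m) (j : Fin m) : 0 ≤ load w N j :=
  sum_nonneg fun i _ => hw i j

lemma le_load (hw : ∀ i j, 0 ≤ w i j) (N : Fin n → Fin m) (i : Fin n) :
    w i (N i) ≤ load w N (N i) :=
  single_le_sum (f := fun i' => w i' (N i)) (fun i' _ => hw i' (N i)) (by simp)

lemma load_update_self (N : Fin n → Fin m) {i : Fin n} {j : Fin m} (h : N i ≠ j) :
    load w (Function.update N i j) j = load w N j + w i j := by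
  have : univ.filter (fun i' => Function.update N i j i' = j)
      = insert i (univ.filter fun i' => N i' = j) := by
    ext i'
    by_cases h' : i' = i <;> simp [h', Function.update_apply]
  rw [load, this, sum_insert (by simp [h]), add_comm, load]

lemma sum_mul_comp_eq_sum_load_mul (N : Fin n → Fin m) (f : Fin m → ℝ) :
    ∑ i, w i (N i) * f (N i) = ∑ j, load w N j * f j := by
  rw [← sum_fiberwise univ N]
  refine sum_congr rfl fun j _ => ?_
  rw [load, sum_mul]
  exact sum_congr rfl fun i hi => by rw [(mem_filter.1 hi).2]

lemma isNashB.mul_load_pow_le {p : ℕ} (hp : p ≠ 0) (hw : ∀ i j, 0 < w i j) {N : Fin n → Fin m}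
    (hN : isNashB p w N) (i : Fin n) (j : Fin m) :
    w i (N i) * load w N (N i) ^ p ≤ w i j * (load w N j + w i j) ^ p := by
  have hL := load_nonneg (fun i j => (hw i j).le) N
  by_cases hj : N i = j
  · subst hj
    exact mul_le_mul_of_nonneg_left
      (pow_le_pow_left₀ (hL _) (le_add_of_nonneg_right (hw i _).le) p) (hw i _).le
  have hwmin := wmin_pos j.pos hw i
  have hrho₀ : ∀ j', 0 ≤ rho w i j' := fun j' => div_nonneg (hw i j').le hwmin.le
  have hrho : ∀ j', (rho w i j' ^ ((1 : ℝ) / p)) ^ p = rho w i j' := fun j' =>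
    one_div (p : ℝ) ▸ rpow_inv_natCast_pow (hrho₀ j') hp
  have h := hN i j
  rw [Bcost, Bcost, Function.update_self, load_update_self N hj] at h
  have hpow := pow_le_pow_left₀ (mul_nonneg (rpow_nonneg (hrho₀ _) _) (hL _)) h p
  rwa [mul_pow, mul_pow, hrho, hrho, rho, rho, div_mul_eq_mul_div, div_mul_eq_mul_div,
    div_le_div_iff_of_pos_right hwmin] at hpow

lemma isNashB.sum_load_pow_succ_le {p : ℕ} (hp : p ≠ 0) (hw : ∀ i j, 0 < w i j)
    {N : Fin n → Fin m} (hN : isNashB p w N) (O : Fin n → Fin m) {T : ℝ}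
    (hT : ∀ j, load w O j ≤ T) :
    ∑ j, load w N j ^ (p + 1) ≤ T * ∑ j, (load w N j + T) ^ p := by
  have hw₀ : ∀ i j, 0 ≤ w i j := fun i j => (hw i j).le
  have hL := load_nonneg hw₀ N
  have hT₀ : ∀ j, 0 ≤ T := fun j => (load_nonneg hw₀ O j).trans (hT j)
  calc ∑ j, load w N j ^ (p + 1) = ∑ i, w i (N i) * load w N (N i) ^ p := by
        simp only [pow_succ']
        exact (sum_mul_comp_eq_sum_load_mul N (load w N · ^ p)).symm
    _ ≤ ∑ i, w i (O i) * (load w N (O i) + w i (O i)) ^ p :=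
        sum_le_sum fun i _ => hN.mul_load_pow_le hp hw i (O i)
    _ ≤ ∑ i, w i (O i) * (load w N (O i) + T) ^ p :=
        sum_le_sum fun i _ => mul_le_mul_of_nonneg_left (pow_le_pow_left₀
          (add_nonneg (hL _) (hw₀ _ _)) (by linarith [(le_load hw₀ O i).trans (hT _)]) p)
          (hw₀ _ _)
    _ = ∑ j, load w O j * (load w N j + T) ^ p :=
        sum_mul_comp_eq_sum_load_mul O (fun j => (load w N j + T) ^ p)
    _ ≤ ∑ j, T * (load w N j + T) ^ p := by
        gcongr with j
        · exact pow_nonneg (add_nonneg (hL j) (hT₀ j)) p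
        · exact hT j
    _ = T * ∑ j, (load w N j + T) ^ p := (mul_sum _ _ _).symm

end Loads

theorem stmt_14 (n m : ℕ) (p : ℕ) (hp : 1 ≤ p) (hm : 0 < m)
    (w : Fin n → Fin m → ℝ) (hw : ∀ i j, 0 < w i j)
    (N O : Fin n → Fin m) (hN : isNashB p w N) :
    (∑ j, load w N j ^ (p + 1)) ^ ((1 : ℝ) / (p + 1)) ≤
      ((2 * p + 1) / Real.log (p + 1)) * (m : ℝ) ^ ((1 : ℝ) / (p + 1)) *
        Finset.univ.sup' ⟨⟨0, hm⟩, Finset.mem_univ _⟩ (load w O) := by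
  set T := univ.sup' ⟨⟨0, hm⟩, mem_univ _⟩ (load w O)
  set S := ∑ j, load w N j ^ (p + 1)
  have hw₀ : ∀ i j, 0 ≤ w i j := fun i j => (hw i j).le
  have hT : ∀ j, load w O j ≤ T := fun j => le_sup' _ (mem_univ j)
  have hT₀ : 0 ≤ T := (load_nonneg hw₀ O _).trans (hT ⟨0, hm⟩)
  have hS₀ : 0 ≤ S := sum_nonneg fun j _ => pow_nonneg (load_nonneg hw₀ N j) _
  have hS : (S ^ (1 / ((p : ℝ) + 1))) ^ (p + 1) = S := by
    rw [one_div, ← Nat.cast_add_one, rpow_inv_natCast_pow hS₀ p.succ_ne_zero]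
  rw [mul_assoc]
  refine le_two_mul_add_one_div_log_mul_of_pow_succ_le hp (rpow_nonneg hS₀ _) (by positivity) ?_
  rw [hS]
  calc S ≤ T * ∑ j, (load w N j + T) ^ p := hN.sum_load_pow_succ_le (by omega) hw O hT
    _ ≤ T * ((m : ℝ) ^ (1 / ((p : ℝ) + 1)) *
          (S ^ (1 / ((p : ℝ) + 1)) + (m : ℝ) ^ (1 / ((p : ℝ) + 1)) * T) ^ p) := by
        gcongr
        simpa using sum_add_pow_le univ (by omega) (load_nonneg hw₀ N) hT₀
    _ = _ := by ring
end
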